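/- Let D be an N×N matrix over ZMod 2 and let V, V' be invertible upper-triangular N×N matrices over ZMod 2 such that both R = D·V and R' = D·V' are reduced. Then R and R' have exactly the same pivot pairs: for all i, j, (i,j) is a pivot pair of R if and only if it is a pivot pair of R'. -/

import Mathlib

/-- `i` is the pivot of column `j` of `M`: the largest row index with a nonzero entry.
(Row/column `p : Fin N` corresponds to index `p+1 ∈ {1,…,N}` of the paper.) -/
def IsLow {N : ℕ} (M : Matrix (Fin N) (Fin N) (ZMod 2)) (i j : Fin N) : Prop :=
  M i j ≠ 0 ∧ ∀ i' : Fin N, M i' j ≠ 0 → i' ≤ i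

/-- A matrix is reduced if its nonzero columns have pairwise distinct pivots. -/
def IsReducedMat {N : ℕ} (M : Matrix (Fin N) (Fin N) (ZMod 2)) : Prop :=
  ∀ i j j' : Fin N, IsLow M i j → IsLow M i j' → j = j'

/-- `rankLL M a b` is the rank of the lower-left submatrix `M[≥ a, ≤ b]` formed by the
rows with (1-based) index `≥ a` and the columns with (1-based) index `≤ b`. -/
noncomputable def rankLL {N : ℕ} (M : Matrix (Fin N) (Fin N) (ZMod 2)) (a b : ℕ) : ℕ :=
  (Matrix.of fun (p : {p : Fin N // a ≤ (p : ℕ) + 1}) (q : {q : Fin N // (q : ℕ) + 1 ≤ b}) =>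
    M p.1 q.1).rank

/-- `V` is upper-triangular. -/
def UpperTri {N : ℕ} (V : Matrix (Fin N) (Fin N) (ZMod 2)) : Prop :=
  ∀ a b : Fin N, b < a → V a b = 0

/-!
For a reduced matrix `R` the nonzero columns of each lower-left block `R[≥ a, ≤ b]` have distinct
pivots, so they are linearly independent and `rankLL R a b` counts them. Hence column `j` has a
nonzero entry in rows `≥ a` exactly when `rankLL R a j < rankLL R a (j + 1)`, and `(i, j)` is a
pivot pair iff this holds for `a = i + 1` but not for `a = i + 2`. Since `V` is upper-triangular,
the lower-left block of `D * V` is that of `D` times an invertible upper-left block of `V`, so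
`rankLL (D * V) = rankLL D`: the pivot pairs of `D * V` are determined by `D` alone.
-/

open Finset

theorem linearIndependent_of_injective_lastNonzero {ι α K : Type*} [Ring K] [NoZeroDivisors K]
    [LinearOrder α] {v : ι → α → K} {l : ι → α} (hl : Function.Injective l)
    (hne : ∀ i, v i (l i) ≠ 0) (hzero : ∀ i a, l i < a → v i a = 0) :
    LinearIndependent K v := by
  classical
  rw [linearIndependent_iff']
  intro s g hg i hi
  by_contra hgi
  obtain ⟨i₀, hi₀, hmax⟩ := (s.filter (g · ≠ 0)).exists_max_image l ⟨i, by simp [hi, hgi]⟩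
  rw [mem_filter] at hi₀
  have hsum : ∑ k ∈ s, g k * v k (l i₀) = 0 := by simpa using congrFun hg (l i₀)
  rw [sum_eq_single_of_mem i₀ hi₀.1] at hsum
  · exact mul_ne_zero hi₀.2 (hne i₀) hsum
  intro k hk hki₀
  by_cases hgk : g k = 0
  · rw [hgk, zero_mul]
  · have hlt : l k < l i₀ := (hmax k (by simp [hk, hgk])).lt_of_ne (hl.ne hki₀)
    rw [hzero k _ hlt, mul_zero]

namespace Matrix

variable {l m n K : Type*}

theorem rank_eq_card_of_linearIndependent_col [Field K] [Fintype n] (A : Matrix m n K)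
    (h : LinearIndependent K fun j : {j // A.col j ≠ 0} => A.col j) :
    A.rank = Nat.card {j // A.col j ≠ 0} := by
  classical
  rw [Nat.card_eq_fintype_card, rank_eq_finrank_span_cols, ← finrank_span_eq_card h]
  suffices Submodule.span K (Set.range A.col)
      = Submodule.span K (Set.range fun j : {j // A.col j ≠ 0} => A.col j) by rw [this]
  refine le_antisymm (Submodule.span_le.2 ?_) (Submodule.span_mono ?_)
  · rintro _ ⟨j, rfl⟩
    by_cases hj : A.col j = 0
    · simp [hj]
    · exact Submodule.subset_span ⟨⟨j, hj⟩, rfl⟩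
  · rintro _ ⟨j, rfl⟩
    exact ⟨j, rfl⟩

theorem IsUpperTriangular.submatrix_mul [Fintype n] [LinearOrder n] [NonUnitalNonAssocSemiring K]
    {V : Matrix n n K} (hV : V.IsUpperTriangular) (D : Matrix m n K) (r : l → m)
    {P : n → Prop} [DecidablePred P] (hP : Antitone P) :
    (D * V).submatrix r (Subtype.val : Subtype P → n)
      = D.submatrix r (Subtype.val : Subtype P → n)
        * V.submatrix (Subtype.val : Subtype P → n) (Subtype.val : Subtype P → n) := by
  ext p q
  simp only [submatrix_apply, mul_apply]
  rw [← Fintype.sum_subtype_add_sum_subtype P,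
    Fintype.sum_eq_zero (fun k : {k // ¬P k} => D (r p) k * V k q) fun k => ?_, add_zero]
  rw [hV (lt_of_not_ge fun hkq => k.2 (hP hkq q.2)), mul_zero]

theorem IsUpperTriangular.isUnit_det_submatrix [Fintype n] [LinearOrder n] [Fintype m]
    [LinearOrder m] [CommRing K] {V : Matrix n n K} (hV : V.IsUpperTriangular)
    (hdet : IsUnit V.det) {f : m → n} (hf : StrictMono f) :
    IsUnit (V.submatrix f f).det := by
  rw [det_of_isUpperTriangular hV, IsUnit.prod_univ_iff] at hdet
  have hVf : (V.submatrix f f).IsUpperTriangular := fun i j hij => hV (hf hij)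
  rw [det_of_isUpperTriangular hVf, IsUnit.prod_univ_iff]
  exact fun i => hdet (f i)

end Matrix

section

variable {N : ℕ}

theorem exists_isLow_of_ne_zero {M : Matrix (Fin N) (Fin N) (ZMod 2)} {p j : Fin N}
    (h : M p j ≠ 0) : ∃ i, p ≤ i ∧ IsLow M i j := by
  obtain ⟨i, hi, hmax⟩ := ({r | M r j ≠ 0} : Finset (Fin N)).exists_max_image id ⟨p, by simpa⟩
  exact ⟨i, hmax p (by simpa), (mem_filter.1 hi).2, fun r hr => hmax r (by simpa)⟩

theorem isLow_iff_exists_ne_zero {M : Matrix (Fin N) (Fin N) (ZMod 2)} {i j : Fin N} :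
    IsLow M i j ↔ (∃ p : Fin N, (i : ℕ) + 1 ≤ p + 1 ∧ M p j ≠ 0) ∧
      ¬∃ p : Fin N, (i : ℕ) + 2 ≤ p + 1 ∧ M p j ≠ 0 := by
  constructor
  · rintro ⟨hij, hmax⟩
    refine ⟨⟨i, le_rfl, hij⟩, fun ⟨p, hp, hpj⟩ => ?_⟩
    have : p ≤ i := hmax p hpj
    omega
  · rintro ⟨⟨p, hp, hpj⟩, habove⟩
    obtain rfl : p = i := by
      refine Fin.ext (le_antisymm ?_ (by omega))
      by_contra! hlt
      exact habove ⟨p, by omega, hpj⟩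
    refine ⟨hpj, fun i' hi' => ?_⟩
    by_contra! hlt
    exact habove ⟨i', by omega, hi'⟩

open Classical in
noncomputable def nonzeroColsLL (M : Matrix (Fin N) (Fin N) (ZMod 2)) (a b : ℕ) :
    Finset (Fin N) :=
  {q | (q : ℕ) + 1 ≤ b ∧ ∃ p : Fin N, a ≤ (p : ℕ) + 1 ∧ M p q ≠ 0}

theorem mem_nonzeroColsLL {M : Matrix (Fin N) (Fin N) (ZMod 2)} {a b : ℕ} {q : Fin N} :
    q ∈ nonzeroColsLL M a b ↔ (q : ℕ) + 1 ≤ b ∧ ∃ p : Fin N, a ≤ (p : ℕ) + 1 ∧ M p q ≠ 0 := by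
  simp [nonzeroColsLL]

theorem rankLL_eq_card_nonzeroColsLL {R : Matrix (Fin N) (Fin N) (ZMod 2)}
    (hR : IsReducedMat R) (a b : ℕ) : rankLL R a b = #(nonzeroColsLL R a b) := by
  set S := R.submatrix (Subtype.val : {p : Fin N // a ≤ (p : ℕ) + 1} → Fin N)
    (Subtype.val : {q : Fin N // (q : ℕ) + 1 ≤ b} → Fin N)
  have hcol : ∀ q, S.col q ≠ 0 ↔ ∃ p : Fin N, a ≤ (p : ℕ) + 1 ∧ R p q ≠ 0 := by
    intro q
    simp [S, funext_iff, Matrix.col]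
  have hlow : ∀ q : {q // S.col q ≠ 0}, ∃ i : {p : Fin N // a ≤ (p : ℕ) + 1}, IsLow R i q := by
    intro q
    obtain ⟨p, hap, hp⟩ := (hcol q).1 q.2
    obtain ⟨i, hpi, hi⟩ := exists_isLow_of_ne_zero hp
    exact ⟨⟨i, hap.trans (by simpa using hpi)⟩, hi⟩
  choose low hlow using hlow
  have hind : LinearIndependent (ZMod 2) fun q : {q // S.col q ≠ 0} => S.col q :=
    linearIndependent_of_injective_lastNonzero (l := low)
      (fun q q' h => Subtype.ext (Subtype.ext (hR _ _ _ (hlow q) (h ▸ hlow q'))))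
      (fun q => (hlow q).1)
      (fun q p hlt => by_contra fun hp => not_le.2 hlt ((hlow q).2 p hp))
  calc rankLL R a b = S.rank := rfl
    _ = Nat.card {q // S.col q ≠ 0} := S.rank_eq_card_of_linearIndependent_col hind
    _ = #(nonzeroColsLL R a b) := by
      rw [nonzeroColsLL, ← Fintype.card_subtype, ← Nat.card_eq_fintype_card]
      exact Nat.card_congr ((Equiv.subtypeEquivRight hcol).trans
        (Equiv.subtypeSubtypeEquivSubtypeInter (fun q : Fin N => (q : ℕ) + 1 ≤ b)
          fun q => ∃ p : Fin N, a ≤ (p : ℕ) + 1 ∧ R p q ≠ 0))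

theorem rankLL_lt_rankLL_succ_iff {R : Matrix (Fin N) (Fin N) (ZMod 2)}
    (hR : IsReducedMat R) (a : ℕ) (j : Fin N) :
    rankLL R a (j : ℕ) < rankLL R a ((j : ℕ) + 1) ↔ ∃ p : Fin N, a ≤ (p : ℕ) + 1 ∧ R p j ≠ 0 := by
  have hsucc : ∀ q : Fin N, q ∈ nonzeroColsLL R a ((j : ℕ) + 1) ↔
      q ∈ nonzeroColsLL R a (j : ℕ) ∨ q = j ∧ ∃ p : Fin N, a ≤ (p : ℕ) + 1 ∧ R p q ≠ 0 := by
    intro q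
    have hle : (q : ℕ) + 1 ≤ j + 1 ↔ (q : ℕ) + 1 ≤ j ∨ q = j := by rw [Fin.ext_iff]; omega
    rw [mem_nonzeroColsLL, mem_nonzeroColsLL, hle, or_and_right]
  rw [rankLL_eq_card_nonzeroColsLL hR, rankLL_eq_card_nonzeroColsLL hR]
  by_cases hX : ∃ p : Fin N, a ≤ (p : ℕ) + 1 ∧ R p j ≠ 0
  · have : nonzeroColsLL R a ((j : ℕ) + 1) = insert j (nonzeroColsLL R a (j : ℕ)) := by
      ext q
      rw [hsucc, mem_insert]
      grind
    rw [this, card_insert_of_notMem (by simp [mem_nonzeroColsLL])]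
    simpa using hX
  · have : nonzeroColsLL R a ((j : ℕ) + 1) = nonzeroColsLL R a (j : ℕ) := by
      ext q
      rw [hsucc]
      grind
    simp [this, hX]

theorem rankLL_mul_of_upperTri (D : Matrix (Fin N) (Fin N) (ZMod 2))
    {V : Matrix (Fin N) (Fin N) (ZMod 2)} (hV : IsUnit V) (hVt : UpperTri V) (a b : ℕ) :
    rankLL (D * V) a b = rankLL D a b := by
  have hcols : Antitone fun q : Fin N => (q : ℕ) + 1 ≤ b := fun q q' hqq' h =>
    le_trans (Nat.succ_le_succ hqq') h
  change ((D * V).submatrix _ _).rank = (D.submatrix _ _).rank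
  rw [Matrix.IsUpperTriangular.submatrix_mul hVt D _ hcols, Matrix.rank_mul_eq_left_of_isUnit_det]
  exact Matrix.IsUpperTriangular.isUnit_det_submatrix hVt
    ((Matrix.isUnit_iff_isUnit_det V).1 hV) (Subtype.strictMono_coe _)

theorem isLow_iff_rankLL {R : Matrix (Fin N) (Fin N) (ZMod 2)} (hR : IsReducedMat R)
    (i j : Fin N) :
    IsLow R i j ↔ rankLL R ((i : ℕ) + 1) (j : ℕ) < rankLL R ((i : ℕ) + 1) ((j : ℕ) + 1) ∧
      ¬rankLL R ((i : ℕ) + 2) (j : ℕ) < rankLL R ((i : ℕ) + 2) ((j : ℕ) + 1) := by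
  rw [isLow_iff_exists_ne_zero, rankLL_lt_rankLL_succ_iff hR, rankLL_lt_rankLL_succ_iff hR]

end

/-- Uniqueness of pivot pairs: any two reductions `R = D * V` and `R' = D * V'` of the same
matrix `D` by invertible upper-triangular matrices have exactly the same pivot pairs. -/
theorem pivot_pairs_unique {N : ℕ} (D V V' : Matrix (Fin N) (Fin N) (ZMod 2))
    (hV : IsUnit V) (hVt : UpperTri V) (hRV : IsReducedMat (D * V))
    (hV' : IsUnit V') (hVt' : UpperTri V') (hRV' : IsReducedMat (D * V')) :
    ∀ i j : Fin N, IsLow (D * V) i j ↔ IsLow (D * V') i j := by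
  intro i j
  simp only [isLow_iff_rankLL hRV, isLow_iff_rankLL hRV', rankLL_mul_of_upperTri D hV hVt,
    rankLL_mul_of_upperTri D hV' hVt']
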